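/- For every index 1 ≤ i ≤ ℓ, the difference operators E_i(u) and E_i(v) satisfy the Yangian same-node raising relation: (u − v)·(E_i(u)∘E_i(v) − E_i(v)∘E_i(u)) = −iħ·d_i·(E_i(u) − E_i(v))∘(E_i(u) − E_i(v)), as an identity of ℂ(u,v)-linear endomorphisms of F. -/

import Mathlib

/-!
Write `σ_k = β_{i,k}⁻¹`, `x_k = γ_{i,k}` and `c = iħd_i`. Then `E(w) = Σ_k g_k (w - x_k)⁻¹ σ_k`
with `g_k = α_k / Π_{p ≠ k} (x_k - x_p)`, where `α_k` is fixed by `σ_l` for `l ≠ k`. Since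
`E(w) E(w') = Σ_{k,l} g_k σ_k(g_l) (w - x_k)⁻¹ (w' - σ_k x_l)⁻¹ σ_k σ_l`, a partial fraction
computation turns `(u - v) [E(u), E(v)] + c (E(u) - E(v))²` into the sum over `(k, l)` of
`g_k σ_k(g_l) (σ_k x_l - x_k + c)` times
`(u - v)² σ_k σ_l / ((u - x_k)(v - x_k)(u - σ_k x_l)(v - σ_k x_l))`.
The diagonal terms vanish because `σ_k x_k = x_k - c`. Off the diagonal, `σ_k` turns the factor
`x_l - x_k` of the Vandermonde denominator of `g_l` into `x_l - x_k + c`; this makes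
`g_k σ_k(g_l) (x_l - x_k + c)` antisymmetric in `(k, l)` while the rest of the term is symmetric,
so the terms cancel in pairs.
-/

open MvPolynomial Complex Finset

noncomputable section

/-- Variables: the spectral variables (indexed by `Fin 2`) and the `γ_{i,k}`. -/
abbrev Var (ℓ : ℕ) (m : Fin ℓ → ℕ) := Fin 2 ⊕ ((i : Fin ℓ) × Fin (m i))

/-- The field of rational functions over `ℂ` in the spectral variables and the `γ_{i,k}`. -/
abbrev FF (ℓ : ℕ) (m : Fin ℓ → ℕ) := FractionRing (MvPolynomial (Var ℓ m) ℂ)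

variable (ℓ : ℕ) (m : Fin ℓ → ℕ)

/-- The embedding of constants `ℂ → F`. -/
def cstHom : ℂ →+* FF ℓ m :=
  (algebraMap (MvPolynomial (Var ℓ m) ℂ) (FF ℓ m)).comp (C : ℂ →+* MvPolynomial (Var ℓ m) ℂ)

def cst (c : ℂ) : FF ℓ m := cstHom ℓ m c

/-- The variable `γ_{i,k}` as an element of `F`. -/
def gam (i : Fin ℓ) (k : Fin (m i)) : FF ℓ m :=
  algebraMap (MvPolynomial (Var ℓ m) ℂ) (FF ℓ m) (X (Sum.inr ⟨i, k⟩))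

/-- The spectral variables. -/
def spec (t : Fin 2) : FF ℓ m :=
  algebraMap (MvPolynomial (Var ℓ m) ℂ) (FF ℓ m) (X (Sum.inl t))

/-- The algebra automorphism of the polynomial ring shifting the variable `w` by `c`
and fixing all other variables. -/
def shiftPoly (c : ℂ) (w : Var ℓ m) :
    MvPolynomial (Var ℓ m) ℂ ≃ₐ[ℂ] MvPolynomial (Var ℓ m) ℂ :=
  AlgEquiv.ofAlgHom
    (aeval (fun j => if j = w then X j + MvPolynomial.C c else X j))
    (aeval (fun j => if j = w then X j - MvPolynomial.C c else X j))
    (by apply MvPolynomial.algHom_ext; intro j; by_cases h : j = w <;> simp [h])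
    (by apply MvPolynomial.algHom_ext; intro j; by_cases h : j = w <;> simp [h])

/-- The induced automorphism of the field of rational functions. -/
def shiftField (c : ℂ) (w : Var ℓ m) : FF ℓ m ≃+* FF ℓ m :=
  IsFractionRing.ringEquivOfRingEquiv (shiftPoly ℓ m c w).toRingEquiv

variable (a : Fin ℓ → Fin ℓ → ℤ) (d : Fin ℓ → ℕ) (hb : ℂ)

/-- `β_{i,k}` : the automorphism `γ_{i,k} ↦ γ_{i,k} + iħ·d_i`. -/
def beta (i : Fin ℓ) (k : Fin (m i)) : FF ℓ m ≃+* FF ℓ m :=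
  shiftField ℓ m (I * hb * (d i : ℂ)) (Sum.inr ⟨i, k⟩)

/-- The constant `(iħ/2)·(d_i·a_{ij} + 2r·d_j)`, where `r` is offset by one
(so that `r` ranges over `0, …, −a_{ji} − 1` in `Finset.range`). -/
def cf (i j : Fin ℓ) (r : ℕ) : ℂ :=
  (I * hb / 2) * ((d i : ℂ) * (a i j : ℂ) + 2 * ((r : ℂ) + 1) * (d j : ℂ))

/-- The operator `E_i(w)`. -/
def Eop (i : Fin ℓ) (w : FF ℓ m) : FF ℓ m → FF ℓ m := fun f =>
  cst ℓ m ((d i : ℂ) ^ (-(1/2 : ℂ))) *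
    ∑ k : Fin (m i),
      ((∏ j ∈ univ.filter (fun j => i < j), ∏ r ∈ range (-(a j i)).toNat, ∏ p : Fin (m j),
          (gam ℓ m i k - gam ℓ m j p - cst ℓ m (cf ℓ a d hb i j r))) /
        ((w - gam ℓ m i k) * ∏ p ∈ univ.erase k, (gam ℓ m i k - gam ℓ m i p))) *
      (beta ℓ m d hb i k).symm f

theorem yangian_kernel_identity {K : Type*} [Field K] {u v x y : K} (c : K)
    (hux : u - x ≠ 0) (hvx : v - x ≠ 0) (huy : u - y ≠ 0) (hvy : v - y ≠ 0) :
    (u - v) * ((u - x)⁻¹ * (v - y)⁻¹ - (v - x)⁻¹ * (u - y)⁻¹)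
        + c * ((u - x)⁻¹ * (u - y)⁻¹ - (u - x)⁻¹ * (v - y)⁻¹
          - ((v - x)⁻¹ * (u - y)⁻¹ - (v - x)⁻¹ * (v - y)⁻¹))
      = (u - v) ^ 2 * (y - x + c) / ((u - x) * (v - x) * (u - y) * (v - y)) := by
  field_simp
  ring

theorem sub_add_ne_zero_of_shift {K ι : Type*} [Field K] [DecidableEq ι]
    {σ : ι → K →+* K} {x : ι → K} {c : K}
    (hσx : ∀ k l, σ k (x l) = if l = k then x l - c else x l)
    (hx : Function.Injective x) {k l : ι} (h : k ≠ l) : x l - x k + c ≠ 0 := by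
  have e : σ k (x l - x k) = x l - x k + c := by
    rw [map_sub, hσx, hσx, if_pos rfl, if_neg h.symm]
    ring
  exact e ▸ (map_ne_zero (σ k)).2 (sub_ne_zero.2 (hx.ne h.symm))

section

variable {K ι : Type*} [Field K] [Fintype ι] [DecidableEq ι]
  (σ : ι → K →+* K) (x α : ι → K)

def shiftOpCoeff (k : ι) : K := α k / ∏ p ∈ univ.erase k, (x k - x p)

def shiftOp (w f : K) : K := ∑ k, shiftOpCoeff x α k / (w - x k) * σ k f

variable {σ x α}

theorem shiftOp_sub (w f g : K) :
    shiftOp σ x α w (f - g) = shiftOp σ x α w f - shiftOp σ x α w g := by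
  simp only [shiftOp, map_sub, mul_sub, sum_sub_distrib]

theorem shiftOp_shiftOp {w w' : K} (hw' : ∀ k, σ k w' = w') (f : K) :
    shiftOp σ x α w (shiftOp σ x α w' f)
      = ∑ k, ∑ l, shiftOpCoeff x α k * σ k (shiftOpCoeff x α l) * σ k (σ l f)
          * ((w - x k)⁻¹ * (w' - σ k (x l))⁻¹) := by
  simp only [shiftOp, map_sum, map_mul, map_div₀, map_sub, hw', mul_sum]
  refine sum_congr rfl fun k _ => sum_congr rfl fun l _ => ?_
  ring

theorem shiftOpCoeff_eq_of_ne {k l : ι} (h : k ≠ l) :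
    shiftOpCoeff x α l = α l / ((x l - x k) * ∏ p ∈ (univ.erase l).erase k, (x l - x p)) := by
  rw [shiftOpCoeff,
    ← mul_prod_erase (univ.erase l) (fun p => x l - x p) (mem_erase.2 ⟨h, mem_univ k⟩)]

variable {c : K}

theorem map_shiftOpCoeff_of_ne (hσx : ∀ k l, σ k (x l) = if l = k then x l - c else x l)
    (hα : ∀ k l, k ≠ l → σ k (α l) = α l) {k l : ι} (h : k ≠ l) :
    σ k (shiftOpCoeff x α l)
      = α l / ((x l - x k + c) * ∏ p ∈ (univ.erase l).erase k, (x l - x p)) := by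
  rw [shiftOpCoeff_eq_of_ne h, map_div₀, map_mul, map_sub, map_prod (σ k), hα k l h, hσx, hσx,
    if_pos rfl, if_neg h.symm]
  congr 2
  · ring
  · refine prod_congr rfl fun p hp => ?_
    rw [map_sub, hσx, hσx, if_neg h.symm, if_neg (ne_of_mem_erase hp)]

theorem shiftOpCoeff_mul_map_antisymm
    (hσx : ∀ k l, σ k (x l) = if l = k then x l - c else x l)
    (hα : ∀ k l, k ≠ l → σ k (α l) = α l) (hx : Function.Injective x) {k l : ι} (h : k ≠ l) :
    shiftOpCoeff x α k * σ k (shiftOpCoeff x α l) * (x l - x k + c)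
      = -(shiftOpCoeff x α l * σ l (shiftOpCoeff x α k) * (x k - x l + c)) := by
  have prod_ne : ∀ k l : ι, ∏ p ∈ (univ.erase l).erase k, (x l - x p) ≠ 0 := fun k l =>
    prod_ne_zero_iff.2 fun p hp =>
      sub_ne_zero.2 (hx.ne (ne_of_mem_erase (mem_of_mem_erase hp)).symm)
  have hkl : x k - x l ≠ 0 := sub_ne_zero.2 (hx.ne h)
  have hlk : x l - x k ≠ 0 := sub_ne_zero.2 (hx.ne h.symm)
  have hshift_kl := sub_add_ne_zero_of_shift hσx hx h
  have hshift_lk := sub_add_ne_zero_of_shift hσx hx h.symm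
  have hprod_kl := prod_ne k l
  have hprod_lk := prod_ne l k
  rw [map_shiftOpCoeff_of_ne hσx hα h, map_shiftOpCoeff_of_ne hσx hα h.symm,
    shiftOpCoeff_eq_of_ne h, shiftOpCoeff_eq_of_ne h.symm]
  field_simp
  ring

theorem sum_sum_shiftOp_kernel_eq_zero
    (hσx : ∀ k l, σ k (x l) = if l = k then x l - c else x l)
    (hα : ∀ k l, k ≠ l → σ k (α l) = α l) (hx : Function.Injective x)
    (hcomm : ∀ k l f, σ k (σ l f) = σ l (σ k f)) (u v f : K) :
    ∑ k, ∑ l, shiftOpCoeff x α k * σ k (shiftOpCoeff x α l) * σ k (σ l f)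
      * ((u - v) ^ 2 * (σ k (x l) - x k + c)
        / ((u - x k) * (v - x k) * (u - σ k (x l)) * (v - σ k (x l)))) = 0 := by
  rw [← Fintype.sum_prod_type']
  refine sum_ninvolution Prod.swap (fun ⟨k, l⟩ => ?_) (fun ⟨k, l⟩ hne => ?_) (fun _ => mem_univ _)
    Prod.swap_swap
  · dsimp only [Prod.swap_prod_mk]
    rcases eq_or_ne k l with rfl | h
    · simp [hσx]
    · simp only [hσx, if_neg h, if_neg h.symm, hcomm l k]
      linear_combination (σ k (σ l f) * ((u - v) ^ 2
        / ((u - x k) * (v - x k) * (u - x l) * (v - x l))))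
        * shiftOpCoeff_mul_map_antisymm hσx hα hx h
  · intro heq
    obtain rfl : l = k := congrArg Prod.fst heq
    simp [hσx] at hne

theorem shiftOp_yangian (hσx : ∀ k l, σ k (x l) = if l = k then x l - c else x l)
    (hα : ∀ k l, k ≠ l → σ k (α l) = α l) (hx : Function.Injective x)
    (hcomm : ∀ k l f, σ k (σ l f) = σ l (σ k f)) {u v : K} (hσu : ∀ k, σ k u = u)
    (hσv : ∀ k, σ k v = v) (hu : ∀ k, u ≠ x k) (hv : ∀ k, v ≠ x k) :
    (u - v) • (shiftOp σ x α u ∘ shiftOp σ x α v - shiftOp σ x α v ∘ shiftOp σ x α u)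
      = (-c) • ((shiftOp σ x α u - shiftOp σ x α v) ∘ (shiftOp σ x α u - shiftOp σ x α v)) := by
  funext f
  simp only [Pi.smul_apply, Pi.sub_apply, Function.comp_apply, smul_eq_mul, shiftOp_sub,
    shiftOp_shiftOp hσu, shiftOp_shiftOp hσv]
  rw [← sub_eq_zero, ← sum_sum_shiftOp_kernel_eq_zero hσx hα hx hcomm u v f]
  simp only [← sum_sub_distrib, mul_sum]
  refine sum_congr rfl fun k _ => sum_congr rfl fun l _ => ?_
  have hul : u - σ k (x l) ≠ 0 := hσu k ▸ map_sub (σ k) u (x l) ▸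
    (map_ne_zero (σ k)).2 (sub_ne_zero.2 (hu l))
  have hvl : v - σ k (x l) ≠ 0 := hσv k ▸ map_sub (σ k) v (x l) ▸
    (map_ne_zero (σ k)).2 (sub_ne_zero.2 (hv l))
  linear_combination (shiftOpCoeff x α k * σ k (shiftOpCoeff x α l) * σ k (σ l f)) *
    yangian_kernel_identity c (sub_ne_zero.2 (hu k)) (sub_ne_zero.2 (hv k)) hul hvl

end

section

variable {ℓ m}

theorem algebraMap_X_injective :
    Function.Injective fun w : Var ℓ m => algebraMap (MvPolynomial (Var ℓ m) ℂ) (FF ℓ m) (X w) :=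
  (IsFractionRing.injective _ _).comp (X_injective (R := ℂ))

theorem shiftPoly_symm_X (c : ℂ) (w j : Var ℓ m) :
    (shiftPoly ℓ m c w).symm (X j) = X j - if j = w then MvPolynomial.C c else 0 := by
  rw [shiftPoly, AlgEquiv.ofAlgHom_symm]
  split_ifs <;> simp [*]

theorem shiftPoly_symm_C (c : ℂ) (w : Var ℓ m) (z : ℂ) :
    (shiftPoly ℓ m c w).symm (MvPolynomial.C z) = MvPolynomial.C z :=
  (shiftPoly ℓ m c w).symm.commutes z

theorem shiftPoly_symm_comm (c c' : ℂ) (w w' : Var ℓ m) (p : MvPolynomial (Var ℓ m) ℂ) :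
    (shiftPoly ℓ m c w).symm ((shiftPoly ℓ m c' w').symm p)
      = (shiftPoly ℓ m c' w').symm ((shiftPoly ℓ m c w).symm p) := by
  suffices h : (shiftPoly ℓ m c w).symm.toAlgHom.comp (shiftPoly ℓ m c' w').symm.toAlgHom
      = (shiftPoly ℓ m c' w').symm.toAlgHom.comp (shiftPoly ℓ m c w).symm.toAlgHom from
    AlgHom.congr_fun h p
  refine MvPolynomial.algHom_ext fun j => ?_
  simp only [AlgHom.comp_apply, AlgEquiv.coe_toAlgHom, shiftPoly_symm_X, map_sub, apply_ite,
    map_zero, shiftPoly_symm_C]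
  split_ifs <;> ring

theorem shiftField_symm_algebraMap (c : ℂ) (w : Var ℓ m) (p : MvPolynomial (Var ℓ m) ℂ) :
    (shiftField ℓ m c w).symm (algebraMap _ (FF ℓ m) p)
      = algebraMap _ (FF ℓ m) ((shiftPoly ℓ m c w).symm p) := by
  rw [shiftField, IsFractionRing.ringEquivOfRingEquiv_symm,
    IsFractionRing.ringEquivOfRingEquiv_algebraMap]
  rfl

theorem shiftField_symm_X (c : ℂ) (w j : Var ℓ m) :
    (shiftField ℓ m c w).symm (algebraMap (MvPolynomial (Var ℓ m) ℂ) (FF ℓ m) (X j))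
      = algebraMap (MvPolynomial (Var ℓ m) ℂ) (FF ℓ m) (X j) - if j = w then cst ℓ m c else 0 := by
  rw [shiftField_symm_algebraMap, shiftPoly_symm_X, map_sub, apply_ite (algebraMap _ _), map_zero]
  rfl

theorem shiftField_symm_cst (c : ℂ) (w : Var ℓ m) (z : ℂ) :
    (shiftField ℓ m c w).symm (cst ℓ m z) = cst ℓ m z := by
  rw [cst, cstHom, RingHom.comp_apply, shiftField_symm_algebraMap]
  exact congrArg _ (shiftPoly_symm_C c w z)

theorem shiftField_symm_comm (c c' : ℂ) (w w' : Var ℓ m) (f : FF ℓ m) :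
    (shiftField ℓ m c w).symm ((shiftField ℓ m c' w').symm f)
      = (shiftField ℓ m c' w').symm ((shiftField ℓ m c w).symm f) := by
  suffices h : (shiftField ℓ m c w).symm.toRingHom.comp (shiftField ℓ m c' w').symm.toRingHom
      = (shiftField ℓ m c' w').symm.toRingHom.comp (shiftField ℓ m c w).symm.toRingHom from
    RingHom.congr_fun h f
  refine IsLocalization.ringHom_ext (nonZeroDivisors (MvPolynomial (Var ℓ m) ℂ))
    (RingHom.ext fun p => ?_)
  simp only [RingHom.comp_apply, RingEquiv.toRingHom_eq_coe, RingEquiv.coe_toRingHom]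
  rw [shiftField_symm_algebraMap, shiftField_symm_algebraMap, shiftField_symm_algebraMap,
    shiftField_symm_algebraMap, shiftPoly_symm_comm]

end

def eopNumerator (i : Fin ℓ) (k : Fin (m i)) : FF ℓ m :=
  cst ℓ m ((d i : ℂ) ^ (-(1/2 : ℂ))) *
    ∏ j ∈ univ.filter (fun j => i < j), ∏ r ∈ range (-(a j i)).toNat, ∏ p : Fin (m j),
      (gam ℓ m i k - gam ℓ m j p - cst ℓ m (cf ℓ a d hb i j r))

section

variable {ℓ m a d hb}

theorem Eop_eq_shiftOp (i : Fin ℓ) :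
    Eop ℓ m a d hb i = shiftOp (fun k => ((beta ℓ m d hb i k).symm : FF ℓ m →+* FF ℓ m))
      (gam ℓ m i) (eopNumerator ℓ m a d hb i) := by
  funext w f
  rw [Eop, shiftOp, mul_sum]
  refine sum_congr rfl fun k _ => ?_
  simp only [shiftOpCoeff, eopNumerator, RingEquiv.coe_toRingHom, div_eq_mul_inv, mul_inv]
  ring

theorem gam_injective (i : Fin ℓ) : Function.Injective (gam ℓ m i) := fun k l h => by
  simpa using algebraMap_X_injective h

theorem spec_ne_gam (t : Fin 2) (i : Fin ℓ) (k : Fin (m i)) : spec ℓ m t ≠ gam ℓ m i k :=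
  algebraMap_X_injective.ne Sum.inl_ne_inr

theorem beta_symm_spec (i : Fin ℓ) (k : Fin (m i)) (t : Fin 2) :
    (beta ℓ m d hb i k).symm (spec ℓ m t) = spec ℓ m t := by
  simp [beta, spec, shiftField_symm_X]

theorem beta_symm_cst (i : Fin ℓ) (k : Fin (m i)) (z : ℂ) :
    (beta ℓ m d hb i k).symm (cst ℓ m z) = cst ℓ m z :=
  shiftField_symm_cst _ _ z

theorem beta_symm_gam (i : Fin ℓ) (k l : Fin (m i)) :
    (beta ℓ m d hb i k).symm (gam ℓ m i l)
      = if l = k then gam ℓ m i l - cst ℓ m (I * hb * (d i : ℂ)) else gam ℓ m i l := by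
  by_cases h : l = k <;> simp [beta, gam, shiftField_symm_X, h]

theorem beta_symm_gam_of_ne {i j : Fin ℓ} (h : j ≠ i) (k : Fin (m i)) (p : Fin (m j)) :
    (beta ℓ m d hb i k).symm (gam ℓ m j p) = gam ℓ m j p := by
  simp [beta, gam, shiftField_symm_X, h]

theorem beta_symm_eopNumerator {i : Fin ℓ} {k l : Fin (m i)} (h : k ≠ l) :
    (beta ℓ m d hb i k).symm (eopNumerator ℓ m a d hb i l) = eopNumerator ℓ m a d hb i l := by
  simp only [eopNumerator, map_mul, map_prod, map_sub, beta_symm_cst, beta_symm_gam,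
    if_neg h.symm]
  refine congrArg _ (prod_congr rfl fun j hj => prod_congr rfl fun r _ =>
    prod_congr rfl fun p _ => ?_)
  rw [beta_symm_gam_of_ne (mem_filter.1 hj).2.ne']

end

theorem yangian_EE_same_general
    (ℓ : ℕ)
    (a : Fin ℓ → Fin ℓ → ℤ)
    (d : Fin ℓ → ℕ)
    (hb : ℂ) (m : Fin ℓ → ℕ)
    (i : Fin ℓ) :
    (spec ℓ m 0 - spec ℓ m 1) •
        (Eop ℓ m a d hb i (spec ℓ m 0) ∘ Eop ℓ m a d hb i (spec ℓ m 1)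
          - Eop ℓ m a d hb i (spec ℓ m 1) ∘ Eop ℓ m a d hb i (spec ℓ m 0))
      = cst ℓ m (-(I * hb) * (d i : ℂ)) •
        ((Eop ℓ m a d hb i (spec ℓ m 0) - Eop ℓ m a d hb i (spec ℓ m 1)) ∘
          (Eop ℓ m a d hb i (spec ℓ m 0) - Eop ℓ m a d hb i (spec ℓ m 1))) := by
  have hc : cst ℓ m (-(I * hb) * (d i : ℂ)) = -cst ℓ m (I * hb * (d i : ℂ)) := by
    rw [cst, cst, ← map_neg, neg_mul]
  rw [hc, Eop_eq_shiftOp]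
  exact shiftOp_yangian (beta_symm_gam i) (fun k l => beta_symm_eopNumerator)
    (gam_injective i) (fun k l => shiftField_symm_comm _ _ _ _) (fun k => beta_symm_spec i k 0)
    (fun k => beta_symm_spec i k 1) (spec_ne_gam 0 i) (spec_ne_gam 1 i)

/-- the Yangian same-node raising relation. -/
theorem yangian_EE_same
    (ℓ : ℕ) (hl : 1 ≤ ℓ)
    (a : Fin ℓ → Fin ℓ → ℤ) (ha : ∀ i, a i i = 2) (ha' : ∀ i j, i ≠ j → a i j ≤ 0)
    (d : Fin ℓ → ℕ) (hd : ∀ i, 0 < d i)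
    (hsym : ∀ i j, (d i : ℤ) * a i j = (d j : ℤ) * a j i)
    (hb : ℂ) (m : Fin ℓ → ℕ) (hm : ∀ i, 0 < m i)
    (i : Fin ℓ) :
    (spec ℓ m 0 - spec ℓ m 1) •
        (Eop ℓ m a d hb i (spec ℓ m 0) ∘ Eop ℓ m a d hb i (spec ℓ m 1)
          - Eop ℓ m a d hb i (spec ℓ m 1) ∘ Eop ℓ m a d hb i (spec ℓ m 0))
      = cst ℓ m (-(I * hb) * (d i : ℂ)) •
        ((Eop ℓ m a d hb i (spec ℓ m 0) - Eop ℓ m a d hb i (spec ℓ m 1)) ∘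
          (Eop ℓ m a d hb i (spec ℓ m 0) - Eop ℓ m a d hb i (spec ℓ m 1))) :=
  yangian_EE_same_general ℓ a d hb m i
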